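/- Let M be a 3-connected non-regular binary matroid with a triangle T′ = {e, e′, t} and a triad T* = {e, e′, f} such that e is a regular element of M. Then e′ is also a regular element of M, i.e., T′ ∩ T* ⊆ R(M). -/

import Mathlib

open Matroid Set

variable {α β : Type*}

/-- Deletion of a set of elements. -/
def Matroid.del (M : Matroid α) (D : Set α) : Matroid α := M ↾ (M.E \ D)

/-- Contraction of a set of elements. -/
def Matroid.con (M : Matroid α) (C : Set α) : Matroid α := (M✶.del C)✶

/-- The rank of a set: the supremum of cardinalities of independent subsets. -/
noncomputable def Matroid.rnk (M : Matroid α) (X : Set α) : ℕ :=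
  sSup (Set.ncard '' {I | M.Indep I ∧ I ⊆ X})

/-- The connectivity function λ(X) = r(X) + r(E − X) − r(M). -/
noncomputable def Matroid.lam (M : Matroid α) (X : Set α) : ℤ :=
  (M.rnk X : ℤ) + (M.rnk (M.E \ X) : ℤ) - (M.rnk M.E : ℤ)

/-- A circuit: a minimal dependent set. -/
def Matroid.IsCircuit' (M : Matroid α) (C : Set α) : Prop :=
  M.Dep C ∧ ∀ D : Set α, D ⊂ C → M.Indep D

/-- A cycle of a (binary) matroid: a disjoint union of circuits. -/
def Matroid.IsCycle (M : Matroid α) (C : Set α) : Prop :=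
  ∃ S : Set (Set α), (∀ c ∈ S, M.IsCircuit' c) ∧ S.PairwiseDisjoint id ∧ C = ⋃₀ S

/-- `M` is representable over the field `𝔽`. -/
def Matroid.IsRepBy (M : Matroid α) (𝔽 : Type) [Field 𝔽] : Prop :=
  ∃ (n : ℕ) (φ : α → (Fin n → 𝔽)), ∀ I : Set α,
    M.Indep I ↔ I ⊆ M.E ∧ LinearIndependent 𝔽 (fun x : I => φ x)

/-- A regular matroid: one representable over every field. -/
def Matroid.IsRegular (M : Matroid α) : Prop :=
  ∀ (𝔽 : Type) [Field 𝔽], M.IsRepBy 𝔽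

/-- A binary matroid: one representable over GF(2). -/
def Matroid.IsBinary (M : Matroid α) : Prop := M.IsRepBy (ZMod 2)

/-- A regular element: one whose deletion and contraction are both regular. -/
def Matroid.IsRegularElem (M : Matroid α) (e : α) : Prop :=
  (M.del {e}).IsRegular ∧ (M.con {e}).IsRegular

/-- An exact j-separation `(X₁, X₂)` of `M`. -/
def Matroid.ExactSep (M : Matroid α) (j : ℕ) (X₁ X₂ : Set α) : Prop :=
  Disjoint X₁ X₂ ∧ X₁ ∪ X₂ = M.E ∧ (j : ℤ) ≤ X₁.ncard ∧ (j : ℤ) ≤ X₂.ncard ∧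
    M.lam X₁ = (j : ℤ) - 1

/-- A j-separation `(X₁, X₂)` of `M`. -/
def Matroid.IsSep (M : Matroid α) (j : ℕ) (X₁ X₂ : Set α) : Prop :=
  Disjoint X₁ X₂ ∧ X₁ ∪ X₂ = M.E ∧ (j : ℤ) ≤ X₁.ncard ∧ (j : ℤ) ≤ X₂.ncard ∧
    M.lam X₁ ≤ (j : ℤ) - 1

/-- A k-connected matroid: no j-separation for j ≤ k − 1. -/
def Matroid.KConnected (M : Matroid α) (k : ℕ) : Prop :=
  ∀ j : ℕ, 1 ≤ j → j ≤ k - 1 → ∀ X₁ X₂ : Set α, ¬ M.IsSep j X₁ X₂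

/-- Matroid isomorphism: a bijection of ground sets preserving independence. -/
def Matroid.MIso (M : Matroid α) (N : Matroid β) : Prop :=
  ∃ e : ↥M.E ≃ ↥N.E, ∀ I : Set ↥M.E,
    M.Indep (Subtype.val '' I) ↔ N.Indep (Subtype.val '' (e '' I))

/-! In `M ／ e′` the triangle `{e, e′, t}` becomes the parallel pair `{e, t}`, so `M ／ e′` is
obtained from `M ／ e′ ＼ e = M ＼ e ／ e′` by adding a parallel copy of `t`; repeating the vector of
`t` represents it, so it is regular whenever `M ＼ e` is. The same argument in `M✶`, where the triad
is a triangle, shows that `M✶ ／ e′ = (M ＼ e′)✶` is regular. Regularity passes to duals because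
the dual of the matroid of vectors `φ i` is represented by the unit vectors of `ι →₀ 𝔽` taken
modulo the space of coefficient vectors `(f (φ i))ᵢ` of linear functionals `f`. -/

theorem Submodule.mem_span_iff_forall_dual {𝔽 V : Type*} [Field 𝔽] [AddCommGroup V]
    [Module 𝔽 V] {T : Set V} {v : V} :
    v ∈ span 𝔽 T ↔ ∀ f : Module.Dual 𝔽 V, (∀ t ∈ T, f t = 0) → f v = 0 := by
  rw [← Subspace.forall_mem_dualAnnihilator_apply_eq_zero_iff]
  simp only [mem_dualAnnihilator]
  exact forall_congr' fun f => imp_congr_left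
    ⟨fun h t ht => h t (subset_span ht), fun h _ hw => (span_le (p := LinearMap.ker f)).2 h hw⟩

theorem Submodule.span_indicator_image_compl {R ι V : Type*} [Semiring R] [AddCommMonoid V]
    [Module R V] (E I : Set ι) (φ : ι → V) :
    span R (E.indicator φ '' Iᶜ) = span R (E.indicator φ '' (E \ I)) := by
  refine le_antisymm (span_le.2 <| image_subset_iff.2 fun a ha => ?_)
    (span_mono (image_mono fun a ha => ha.2))
  by_cases haE : a ∈ E
  · exact subset_span ⟨a, ⟨haE, ha⟩, rfl⟩
  · simp [indicator_of_notMem haE]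

section DualFamily

variable {𝔽 ι V : Type*} [Field 𝔽] [AddCommGroup V] [Module 𝔽 V]

variable (𝔽) in
noncomputable def rowSpace (φ : ι → V) : Submodule 𝔽 (ι →₀ 𝔽) where
  carrier := {l | ∃ f : Module.Dual 𝔽 V, ∀ i, l i = f (φ i)}
  add_mem' := by
    rintro l l' ⟨f, hf⟩ ⟨f', hf'⟩
    exact ⟨f + f', fun i => by simp [hf, hf']⟩
  zero_mem' := ⟨0, fun i => by simp⟩
  smul_mem' := by
    rintro c l ⟨f, hf⟩
    exact ⟨c • f, fun i => by simp [hf]⟩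

variable (𝔽) in
/-- A representation of the dual matroid: the coordinate-free form of passing from `[I | A]`
to `[-Aᵀ | I]`. -/
noncomputable def dualFamily (φ : ι → V) (i : ι) : (ι →₀ 𝔽) ⧸ rowSpace 𝔽 φ :=
  (rowSpace 𝔽 φ).mkQ (Finsupp.single i 1)

lemma linearCombination_dualFamily (φ : ι → V) (l : ι →₀ 𝔽) :
    Finsupp.linearCombination 𝔽 (dualFamily 𝔽 φ) l = (rowSpace 𝔽 φ).mkQ l := by
  have h : dualFamily 𝔽 φ = (rowSpace 𝔽 φ).mkQ ∘ fun i => Finsupp.single i 1 := rfl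
  rw [h, ← Finsupp.apply_linearCombination, Finsupp.linearCombination_apply]
  simp

lemma linearIndepOn_dualFamily_iff (φ : ι → V) {s : Set ι} (hs : s.Finite) :
    LinearIndepOn 𝔽 (dualFamily 𝔽 φ) s ↔ ∀ i ∈ s, φ i ∈ Submodule.span 𝔽 (φ '' sᶜ) := by
  simp only [Submodule.mem_span_iff_forall_dual, forall_mem_image, mem_compl_iff,
    linearIndepOn_iff, linearCombination_dualFamily, Submodule.mkQ_apply,
    Submodule.Quotient.mk_eq_zero]
  constructor
  · intro h i hi f hf
    have hsupp : (Function.support fun j => f (φ j)) ⊆ s :=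
      fun j hj => by_contra fun hjs => hj (hf hjs)
    have hmem : Finsupp.ofSupportFinite _ (hs.subset hsupp) ∈ Finsupp.supported 𝔽 𝔽 s :=
      (Finsupp.mem_supported 𝔽 _).2 fun j hj =>
        hsupp (by simpa [Finsupp.ofSupportFinite_coe] using hj)
    exact DFunLike.congr_fun (h _ hmem ⟨f, fun j => rfl⟩) i
  · rintro h l hl ⟨f, hf⟩
    have hl' : ∀ j ∉ s, l j = 0 := fun j hj => Finsupp.notMem_support_iff.1 fun h => hj (hl h)
    ext i
    by_cases hi : i ∈ s
    · rw [hf]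
      exact h i hi f fun j hj => by rw [← hf, hl' j hj]
    · exact hl' i hi

end DualFamily

namespace Matroid

section LinearRep

variable {𝔽 V : Type*} [Field 𝔽] [AddCommGroup V] [Module 𝔽 V] {M : Matroid α} {φ : α → V}
  {I X : Set α} {y : α}

variable (𝔽) in
def IsLinearRep (M : Matroid α) (φ : α → V) : Prop :=
  ∀ I, M.Indep I ↔ I ⊆ M.E ∧ LinearIndepOn 𝔽 φ I

namespace IsLinearRep

lemma mem_closure_iff_of_indep (h : M.IsLinearRep 𝔽 φ) (hI : M.Indep I) :
    y ∈ M.closure I ↔ y ∈ M.E ∧ φ y ∈ Submodule.span 𝔽 (φ '' I) := by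
  by_cases hyI : y ∈ I
  · exact iff_of_true (M.subset_closure I hI.subset_ground hyI)
      ⟨hI.subset_ground hyI, Submodule.subset_span (mem_image_of_mem φ hyI)⟩
  rw [hI.mem_closure_iff_of_notMem hyI, dep_iff, h, linearIndepOn_insert hyI, insert_subset_iff]
  have := (h I).1 hI
  tauto

lemma mem_closure_iff (h : M.IsLinearRep 𝔽 φ) (hX : X ⊆ M.E) :
    y ∈ M.closure X ↔ y ∈ M.E ∧ φ y ∈ Submodule.span 𝔽 (φ '' X) := by
  obtain ⟨I, hIX⟩ := M.exists_isBasis X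
  have hspan : Submodule.span 𝔽 (φ '' X) = Submodule.span 𝔽 (φ '' I) :=
    le_antisymm (Submodule.span_le.2 <| image_subset_iff.2 fun x hx =>
        ((h.mem_closure_iff_of_indep hIX.indep).1 (hIX.subset_closure hx)).2)
      (Submodule.span_mono (image_mono hIX.subset))
  rw [← hIX.closure_eq_closure, h.mem_closure_iff_of_indep hIX.indep, hspan]

lemma dual_indep_iff (h : M.IsLinearRep 𝔽 φ) :
    M✶.Indep I ↔ I ⊆ M.E ∧ ∀ y ∈ I, φ y ∈ Submodule.span 𝔽 (φ '' (M.E \ I)) := by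
  rw [← coindep_def]
  refine ⟨fun hI => ⟨hI.subset_ground, fun y hy => ?_⟩, fun ⟨hIE, hI⟩ => ?_⟩
  · refine ((h.mem_closure_iff sdiff_subset).1 ?_).2
    rw [hI.closure_compl]
    exact hI.subset_ground hy
  · rw [coindep_iff_compl_spanning hIE, spanning_iff_ground_subset_closure sdiff_subset]
    intro y hy
    rw [h.mem_closure_iff sdiff_subset]
    by_cases hyI : y ∈ I
    · exact ⟨hy, hI y hyI⟩
    · exact ⟨hy, Submodule.subset_span ⟨y, ⟨hy, hyI⟩, rfl⟩⟩

lemma indicator (h : M.IsLinearRep 𝔽 φ) : M.IsLinearRep 𝔽 (M.E.indicator φ) := fun I =>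
  (h I).trans <| and_congr_right fun hI =>
    linearIndepOn_congr fun _ ha => (indicator_of_mem (hI ha) φ).symm

lemma dual [M.Finite] (h : M.IsLinearRep 𝔽 φ) :
    M✶.IsLinearRep 𝔽 (dualFamily 𝔽 (M.E.indicator φ)) := fun I => by
  rw [h.indicator.dual_indep_iff, dual_ground]
  refine and_congr_right fun hI => ?_
  rw [linearIndepOn_dualFamily_iff _ (M.ground_finite.subset hI),
    Submodule.span_indicator_image_compl]

lemma delete (h : M.IsLinearRep 𝔽 φ) (D : Set α) : (M ＼ D).IsLinearRep 𝔽 φ := fun I => by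
  rw [delete_indep_iff, h, delete_ground, subset_sdiff]
  tauto

lemma comap {N : Matroid β} {φ : β → V} (h : N.IsLinearRep 𝔽 φ) (f : α → β) :
    (N.comap f).IsLinearRep 𝔽 (φ ∘ f) := fun I => by
  rw [comap_indep_iff, h, comap_ground_eq, ← image_subset_iff, and_assoc]
  exact and_congr_right fun _ => ⟨fun ⟨hI, hf⟩ => hI.comp_of_image hf,
    fun hI => ⟨hI.image_of_comp, hI.injOn.of_comp⟩⟩

end IsLinearRep

end LinearRep

section Representable

variable {𝔽 : Type} [Field 𝔽] {V : Type*} [AddCommGroup V] [Module 𝔽 V] {M : Matroid α}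

lemma isRepBy_iff : M.IsRepBy 𝔽 ↔ ∃ (n : ℕ) (φ : α → Fin n → 𝔽), M.IsLinearRep 𝔽 φ := Iff.rfl

lemma IsLinearRep.isRepBy [M.Finite] {φ : α → V} (h : M.IsLinearRep 𝔽 φ) : M.IsRepBy 𝔽 := by
  classical
  let U := Submodule.span 𝔽 (φ '' M.E)
  have : FiniteDimensional 𝔽 U := FiniteDimensional.span_of_finite 𝔽 (M.ground_finite.image φ)
  let e := (Module.finBasis 𝔽 U).equivFun
  let ψ : α → Fin _ → 𝔽 := fun a =>
    if ha : a ∈ M.E then e ⟨φ a, Submodule.subset_span (mem_image_of_mem φ ha)⟩ else 0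
  refine isRepBy_iff.2 ⟨_, ψ, fun I => (h I).trans (and_congr_right fun hI => ?_)⟩
  have hφψ : EqOn φ ((U.subtype ∘ₗ e.symm.toLinearMap) ∘ ψ) I := fun a ha => by
    simp [ψ, dif_pos (hI ha)]
  rw [linearIndepOn_congr hφψ]
  exact LinearMap.linearIndepOn_iff_of_injOn _
    ((U.injective_subtype.comp e.symm.injective).injOn)

lemma IsRepBy.delete (h : M.IsRepBy 𝔽) (D : Set α) : (M ＼ D).IsRepBy 𝔽 :=
  let ⟨n, φ, hφ⟩ := isRepBy_iff.1 h
  ⟨n, φ, hφ.delete D⟩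

lemma IsRepBy.comap {N : Matroid β} (h : N.IsRepBy 𝔽) (f : α → β) : (N.comap f).IsRepBy 𝔽 :=
  let ⟨n, φ, hφ⟩ := isRepBy_iff.1 h
  ⟨n, φ ∘ f, hφ.comap f⟩

lemma IsRepBy.dual [M.Finite] (h : M.IsRepBy 𝔽) : M✶.IsRepBy 𝔽 :=
  let ⟨_, _, hφ⟩ := isRepBy_iff.1 h
  hφ.dual.isRepBy

lemma IsRegular.delete (h : M.IsRegular) (D : Set α) : (M ＼ D).IsRegular :=
  fun 𝔽 _ => (h 𝔽).delete D

lemma IsRegular.comap {N : Matroid β} (h : N.IsRegular) (f : α → β) : (N.comap f).IsRegular :=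
  fun 𝔽 _ => (h 𝔽).comap f

lemma IsRegular.dual [M.Finite] (h : M.IsRegular) : M✶.IsRegular :=
  fun 𝔽 _ => (h 𝔽).dual

lemma IsRegular.contract [M.Finite] (h : M.IsRegular) (C : Set α) : (M ／ C).IsRegular :=
  (h.dual.delete C).dual

end Representable

section ParallelPair

variable {M : Matroid α} {J : Set α} {e e' x : α}

lemma isCircuit'_iff {C : Set α} : M.IsCircuit' C ↔ M.IsCircuit C :=
  isCircuit_iff_forall_ssubset.symm

lemma Indep.insert_of_isCircuit_pair (h : M.Indep (insert e J)) (heJ : e ∉ J) (hex : e ≠ x)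
    (hC : M.IsCircuit {e, x}) : M.Indep (insert x J) := by
  have hJ : M.Indep J := h.subset (subset_insert e J)
  have heJcl : e ∉ M.closure J := ((hJ.insert_indep_iff_of_notMem heJ).1 h).2
  have hecl : e ∈ M.closure {x} := by
    simpa [hex] using hC.mem_closure_sdiff_singleton_of_mem (mem_insert e {x})
  refine hJ.insert_indep_iff.2 (Or.inl ⟨hC.subset_ground (by simp), fun hxcl => heJcl ?_⟩)
  exact M.closure_subset_closure_of_subset_closure (singleton_subset_iff.2 hxcl) hecl

/-- Replacing `e` by `x` identifies `M` with the matroid `M ＼ e` in which `x` has been doubled. -/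
lemma eq_comap_delete_of_isCircuit_pair [DecidableEq α] (hex : e ≠ x) (hC : M.IsCircuit {e, x}) :
    M = (M ＼ {e}).comap (Function.update id e x) := by
  set σ := Function.update id e x
  have hσe : σ e = x := Function.update_self ..
  have hσ : ∀ a, a ≠ e → σ a = a := fun a ha => Function.update_of_ne ha ..
  have hσJ : ∀ J : Set α, e ∉ J → σ '' J = J ∧ InjOn σ J := fun J heJ =>
    have hJ : EqOn σ id J := fun a ha => hσ a (ne_of_mem_of_not_mem ha heJ)
    ⟨hJ.image_eq_self, injOn_id J |>.congr hJ.symm⟩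
  have heE : e ∈ M.E := hC.subset_ground (by simp)
  have hxE : x ∈ M.E := hC.subset_ground (by simp)
  refine ext_indep ?_ fun I _ => ?_
  · ext a
    obtain rfl | hae := eq_or_ne a e
    · simp [hσe, heE, hxE, hex.symm]
    · simp [hσ a hae, hae]
  rw [comap_indep_iff, delete_indep_iff]
  by_cases heI : e ∉ I
  · rw [(hσJ I heI).1, and_iff_left (hσJ I heI).2, disjoint_singleton_right, and_iff_left heI]
  obtain ⟨J, rfl, heJ⟩ : ∃ J, I = insert e J ∧ e ∉ J := ⟨I \ {e}, (insert_sdiff_self_of_mem (not_not.1 heI)).symm, by simp⟩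
  obtain ⟨hσJ, hinj⟩ := hσJ J heJ
  rw [image_insert_eq, hσJ, hσe, injOn_insert heJ, hσe, hσJ, and_iff_right hinj,
    disjoint_singleton_right, mem_insert_iff, not_or, and_iff_left (And.intro hex heJ)]
  refine ⟨fun h => ?_, fun ⟨h, hxJ⟩ => ?_⟩
  · have hxJ : x ∉ J := fun hxJ => hC.not_indep (h.subset (pair_subset (mem_insert e J)
      (mem_insert_of_mem e hxJ)))
    exact ⟨h.insert_of_isCircuit_pair heJ hex hC, hxJ⟩
  · rw [pair_comm] at hC
    exact h.insert_of_isCircuit_pair hxJ hex.symm hC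

lemma IsRegular.contractElem_of_isCircuit [M.Finite] (hC : M.IsCircuit {e, e', x})
    (hee' : e ≠ e') (hex : e ≠ x) (he'x : e' ≠ x) (h : (M ＼ {e}).IsRegular) :
    (M ／ {e'}).IsRegular := by
  classical
  have hpair : (M ／ {e'}).IsCircuit {e, x} := by
    convert hC.contractElem_isCircuit ⟨e, by simp, e', by simp, hee'⟩ (e := e') (by simp) using 1
    ext a
    simp only [mem_sdiff, mem_insert_iff, mem_singleton_iff]
    grind
  rw [eq_comap_delete_of_isCircuit_pair hex hpair,
    contract_delete_comm _ (disjoint_singleton.2 hee'.symm)]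
  exact (h.contract {e'}).comap _

end ParallelPair

end Matroid

theorem regularElem_of_fan_general (M : Matroid α) [M.Finite] (e e' t f : α)
    (hne : e ≠ e') (het : e ≠ t) (he't : e' ≠ t) (hef : e ≠ f) (he'f : e' ≠ f)
    (hT' : M.IsCircuit' {e, e', t}) (hTs : M✶.IsCircuit' {e, e', f})
    (hreg : M.IsRegularElem e) :
    M.IsRegularElem e' := by
  obtain ⟨hdel, hcon⟩ : (M ＼ {e}).IsRegular ∧ (M ／ {e}).IsRegular := hreg
  show (M ＼ {e'}).IsRegular ∧ (M ／ {e'}).IsRegular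
  have hcon' : (M✶ ＼ {e}).IsRegular := dual_contract M {e} ▸ hcon.dual
  refine ⟨?_, hdel.contractElem_of_isCircuit (isCircuit'_iff.1 hT') hne het he't⟩
  rw [← dual_contract_dual]
  exact (hcon'.contractElem_of_isCircuit (isCircuit'_iff.1 hTs) hne hef he'f).dual

/-- if a triangle {e, e′, t} and a triad {e, e′, f} share the
regular element e, then e′ is also regular. -/
theorem regularElem_of_fan (M : Matroid α) [M.Finite] (hb : M.IsBinary)
    (hc : M.KConnected 3) (hnr : ¬ M.IsRegular) (e e' t f : α)
    (hne : e ≠ e') (het : e ≠ t) (he't : e' ≠ t) (hef : e ≠ f) (he'f : e' ≠ f)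
    (hT' : M.IsCircuit' {e, e', t}) (hTs : M✶.IsCircuit' {e, e', f})
    (hreg : M.IsRegularElem e) :
    M.IsRegularElem e' :=
  regularElem_of_fan_general M e e' t f hne het he't hef he'f hT' hTs hreg
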